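/- Let m ≥ 3 be an integer and let E(a,b) = ∫₀¹ e^{−i(ax + b x^m)} dx be the Fourier extension of the constant function 1 on the curve {(x,x^m) : x ∈ [0,1]} (with respect to the measure dx). Then ∫_{ℝ²} |E(a,b)|^{m+1} da db = ∞; in particular the adjoint restriction estimate ‖E‖_{L^{p'}(ℝ²)} ≤ C ‖1‖_{L^{q'}} fails at the endpoint p' = m+1. -/

import Mathlib

/-!
On the box `0 < a ≤ A/20`, `A^m < b ≤ 5A^m/4` (with `A ≥ 1`) take `t = 1/A`. On `[0, t]` the
phase `a x + b x^m` stays below about `1`, so `Re ∫₀ᵗ` is at least `0.77 t` by `cos y ≥ 1 - y²/2`;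
on `[t, 1]` the phase has increasing derivative `≥ m b t^(m-1) ≥ 3/t`, so van der Corput bounds
that piece by `2t/3`. Hence `|E| ≥ 1/(10A)` on a box of area `A^(m+1)/80`, so every box
contributes the same positive amount to `∫ |E|^(m+1)`, and the boxes for `A = 2^n` are disjoint.
-/

open MeasureTheory Set
open scoped ENNReal

open Complex in
lemma norm_exp_neg_I_mul_ofReal (y : ℝ) : ‖exp (-I * y)‖ = 1 := by
  simpa [← mul_neg] using norm_exp_I_mul_ofReal (-y)

open Complex in
lemma exp_neg_I_mul_ofReal_re (y : ℝ) : (exp (-I * y)).re = Real.cos y := by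
  simp [exp_re]

open Complex intervalIntegral in
/-- Van der Corput's first-derivative estimate: integrate by parts against `I / φ'`. -/
lemma norm_integral_exp_neg_I_mul_le {φ φ' φ'' : ℝ → ℝ} {s t : ℝ} (hst : s ≤ t)
    (hφ : ∀ x ∈ Icc s t, HasDerivAt φ (φ' x) x) (hφ' : ∀ x ∈ Icc s t, HasDerivAt φ' (φ'' x) x)
    (hφ''_cont : ContinuousOn φ'' (Icc s t)) (hφ''_nonneg : ∀ x ∈ Icc s t, 0 ≤ φ'' x)
    (hφ'_pos : ∀ x ∈ Icc s t, 0 < φ' x) :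
    ‖∫ x in s..t, exp (-I * φ x)‖ ≤ 2 / φ' s := by
  set e : ℝ → ℂ := fun x => exp (-I * φ x)
  set g : ℝ → ℂ := fun x => I * (φ' x : ℂ)⁻¹
  set g' : ℝ → ℂ := fun x => -I * (φ'' x / φ' x ^ 2 : ℂ)
  have hIcc : uIcc s t = Icc s t := uIcc_of_le hst
  have hφ'_ne : ∀ x ∈ Icc s t, (φ' x : ℂ) ≠ 0 := fun x hx => ofReal_ne_zero.2 (hφ'_pos x hx).ne'
  have he : ∀ x ∈ uIcc s t, HasDerivAt e (-I * φ' x * e x) x := fun x hx => by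
    simpa [e, mul_comm] using (((hφ x (hIcc ▸ hx)).ofReal_comp).const_mul (-I)).cexp
  have hg : ∀ x ∈ uIcc s t, HasDerivAt g (g' x) x := fun x hx => by
    rw [hIcc] at hx
    exact ((((hφ' x hx).ofReal_comp).inv (hφ'_ne x hx)).const_mul I).congr_deriv (by ring)
  have hφ_cont : ContinuousOn φ (Icc s t) := fun x hx => (hφ x hx).continuousAt.continuousWithinAt
  have hφ'_cont : ContinuousOn φ' (Icc s t) :=
    fun x hx => (hφ' x hx).continuousAt.continuousWithinAt
  have he_cont : ContinuousOn e (Icc s t) := by fun_prop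
  have hg'_cont : ContinuousOn g' (Icc s t) := by
    refine continuousOn_const.mul (ContinuousOn.div (by fun_prop) (by fun_prop) ?_)
    exact fun x hx => pow_ne_zero 2 (hφ'_ne x hx)
  have hibp : ∫ x in s..t, e x = g t * e t - g s * e s - ∫ x in s..t, g' x * e x := by
    rw [← integral_mul_deriv_eq_deriv_mul hg he (hIcc ▸ hg'_cont).intervalIntegrable
      (hIcc ▸ (by fun_prop : ContinuousOn (fun x => -I * φ' x * e x) (Icc s t))).intervalIntegrable]
    refine integral_congr fun x hx => ?_
    have hx' := hφ'_ne x (hIcc ▸ hx)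
    rw [show g x * (-I * φ' x * e x) = -(I * I) * ((φ' x : ℂ)⁻¹ * φ' x) * e x by ring,
      inv_mul_cancel₀ hx', I_mul_I]
    ring
  have hnorm_ge : ∀ x ∈ Icc s t, ‖g x * e x‖ = (φ' x)⁻¹ := fun x hx => by
    rw [norm_mul, norm_exp_neg_I_mul_ofReal, mul_one, norm_mul, norm_I, one_mul, norm_inv,
      norm_real, Real.norm_of_nonneg (hφ'_pos x hx).le]
  have hnorm_g'e : ∀ x ∈ Icc s t, ‖g' x * e x‖ = φ'' x / φ' x ^ 2 := fun x hx => by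
    rw [norm_mul, norm_exp_neg_I_mul_ofReal, mul_one, norm_mul, norm_neg, norm_I, one_mul,
      norm_div, norm_pow, norm_real, norm_real, Real.norm_of_nonneg (hφ''_nonneg x hx),
      Real.norm_of_nonneg (hφ'_pos x hx).le]
  have hftc : ∫ x in s..t, φ'' x / φ' x ^ 2 = (φ' s)⁻¹ - (φ' t)⁻¹ := by
    rw [integral_eq_sub_of_hasDerivAt (f := fun x => -(φ' x)⁻¹) (fun x hx => ?_)
      (hIcc ▸ hφ''_cont.div (hφ'_cont.pow 2) fun x hx => pow_ne_zero 2 (hφ'_pos x hx).ne').intervalIntegrable]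
    · ring
    · exact ((hφ' x (hIcc ▸ hx)).inv (hφ'_pos x (hIcc ▸ hx)).ne').neg.congr_deriv (by ring)
  have hrest : ‖∫ x in s..t, g' x * e x‖ ≤ (φ' s)⁻¹ - (φ' t)⁻¹ := by
    rw [← hftc]
    refine (intervalIntegral.norm_integral_le_integral_norm hst).trans_eq (integral_congr fun x hx => ?_)
    exact hnorm_g'e x (hIcc ▸ hx)
  calc ‖∫ x in s..t, e x‖
      ≤ ‖g t * e t‖ + ‖g s * e s‖ + ‖∫ x in s..t, g' x * e x‖ := by
        rw [hibp]
        linarith [norm_sub_le (g t * e t - g s * e s) (∫ x in s..t, g' x * e x),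
          norm_sub_le (g t * e t) (g s * e s)]
    _ ≤ (φ' t)⁻¹ + (φ' s)⁻¹ + ((φ' s)⁻¹ - (φ' t)⁻¹) := by
        rw [hnorm_ge t ⟨hst, le_rfl⟩, hnorm_ge s ⟨le_rfl, hst⟩]; linarith
    _ = 2 / φ' s := by ring
lemma sub_le_integral_cos_mul_add_mul_pow (a b : ℝ) (m : ℕ) {t : ℝ} (ht : 0 ≤ t) :
    t - a ^ 2 * t ^ 3 / 3 - b ^ 2 * t ^ (2 * m + 1) / (2 * m + 1) ≤
      ∫ x in 0..t, Real.cos (a * x + b * x ^ m) := by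
  have hint (f : ℝ → ℝ) (hf : Continuous f) : IntervalIntegrable f volume 0 t :=
    hf.intervalIntegrable 0 t
  have hpoly : ∫ x in 0..t, (1 - a ^ 2 * x ^ 2 - b ^ 2 * x ^ (2 * m)) =
      t - a ^ 2 * t ^ 3 / 3 - b ^ 2 * t ^ (2 * m + 1) / (2 * m + 1) := by
    rw [intervalIntegral.integral_sub (hint _ (by fun_prop)) (hint _ (by fun_prop)),
      intervalIntegral.integral_sub (hint _ (by fun_prop)) (hint _ (by fun_prop)),
      intervalIntegral.integral_const_mul, intervalIntegral.integral_const_mul, integral_pow,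
      integral_pow, intervalIntegral.integral_const, smul_eq_mul, mul_one]
    push_cast
    ring
  rw [← hpoly]
  refine intervalIntegral.integral_mono_on ht (hint _ (by fun_prop)) (hint _ (by fun_prop))
    fun x _ => ?_
  have hsq : (a * x + b * x ^ m) ^ 2 / 2 ≤ a ^ 2 * x ^ 2 + b ^ 2 * x ^ (2 * m) := by
    rw [pow_mul']
    nlinarith [sq_nonneg (a * x - b * x ^ m)]
  linarith [Real.one_sub_sq_div_two_le_cos (x := a * x + b * x ^ m)]

noncomputable def curveExtension (m : ℕ) (a b : ℝ) : ℂ :=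
  ∫ x in Ioc (0 : ℝ) 1, Complex.exp (-Complex.I * ((a : ℂ) * (x : ℂ) + (b : ℂ) * (x : ℂ) ^ m))

open Complex in
lemma div_ten_le_norm_curveExtension {m : ℕ} (hm : 3 ≤ m) {a b t : ℝ} (ha : 0 ≤ a)
    (ht₀ : 0 < t) (ht₁ : t ≤ 1) (hat : a * t ≤ 1 / 20) (hbt : 1 ≤ b * t ^ m)
    (hbt' : b * t ^ m ≤ 5 / 4) :
    t / 10 ≤ ‖curveExtension m a b‖ := by
  set f : ℝ → ℂ := fun x => exp (-I * ↑(a * x + b * x ^ m))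
  have hf : Continuous f := by fun_prop
  have hb : 0 < b := by nlinarith [pow_pos ht₀ m]
  have hm' : (3 : ℝ) ≤ m := by exact_mod_cast hm
  have hsplit : curveExtension m a b = (∫ x in 0..t, f x) + ∫ x in t..1, f x := by
    rw [intervalIntegral.integral_add_adjacent_intervals (hf.intervalIntegrable _ _)
      (hf.intervalIntegrable _ _), intervalIntegral.integral_of_le zero_le_one, curveExtension]
    simp only [f, ofReal_add, ofReal_mul, ofReal_pow]
  have hmain : t - t / 1200 - 25 * t / 112 ≤ ‖∫ x in 0..t, f x‖ := by
    have hre : (∫ x in 0..t, f x).re = ∫ x in 0..t, Real.cos (a * x + b * x ^ m) := by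
      rw [← RCLike.re_to_complex, ← intervalIntegral.intervalIntegral_re (hf.intervalIntegrable _ _)]
      simp only [RCLike.re_to_complex, f, exp_neg_I_mul_ofReal_re]
    have hlin : a ^ 2 * t ^ 3 / 3 ≤ t / 1200 := by
      rw [show a ^ 2 * t ^ 3 / 3 = (a * t) ^ 2 * t / 3 by ring]
      have : (a * t) ^ 2 ≤ (1 / 20) ^ 2 := pow_le_pow_left₀ (by positivity) hat 2
      nlinarith
    have hpow : b ^ 2 * t ^ (2 * m + 1) / (2 * m + 1) ≤ 25 * t / 112 := by
      rw [show b ^ 2 * t ^ (2 * m + 1) = (b * t ^ m) ^ 2 * t by ring]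
      calc (b * t ^ m) ^ 2 * t / (2 * m + 1) ≤ (5 / 4) ^ 2 * t / 7 := by
            gcongr
            linarith
        _ = 25 * t / 112 := by ring
    have := sub_le_integral_cos_mul_add_mul_pow a b m ht₀.le
    linarith [re_le_norm (∫ x in 0..t, f x)]
  have htail : ‖∫ x in t..1, f x‖ ≤ 2 * t / 3 := by
    have hφ'_pos : ∀ x ∈ Icc t 1, 0 < a + m * b * x ^ (m - 1) := fun x hx => by
      have := ht₀.trans_le hx.1
      positivity
    refine (norm_integral_exp_neg_I_mul_le ht₁ (φ' := fun x => a + m * b * x ^ (m - 1))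
      (φ'' := fun x => m * b * ((m - 1 : ℕ) * x ^ (m - 1 - 1))) (fun x _ => ?_) (fun x _ => ?_)
      (by fun_prop) (fun x hx => ?_) hφ'_pos).trans ?_
    · exact (((hasDerivAt_id x).const_mul a).add ((hasDerivAt_pow m x).const_mul b)).congr_deriv
        (by ring)
    · exact ((hasDerivAt_pow (m - 1) x).const_mul _).const_add a
    · have := ht₀.trans_le hx.1
      positivity
    · have hmt : m * b * t ^ (m - 1) * t = m * (b * t ^ m) := by
        rw [mul_assoc _ (t ^ (m - 1)), ← pow_succ, Nat.sub_add_cancel (by omega : 1 ≤ m)]; ring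
      rw [div_le_iff₀ (hφ'_pos t ⟨le_rfl, ht₁⟩)]
      nlinarith
  calc t / 10 ≤ ‖∫ x in 0..t, f x‖ - ‖∫ x in t..1, f x‖ := by linarith
    _ ≤ ‖curveExtension m a b‖ := by
      simpa [hsplit] using norm_sub_norm_le (∫ x in 0..t, f x) (-∫ x in t..1, f x)

lemma lintegral_eq_top_of_le_setLIntegral {α ι : Type*} [MeasurableSpace α] [Countable ι]
    [Infinite ι] {μ : Measure α} {f : α → ℝ≥0∞} {S : ι → Set α}
    (hS : ∀ i, MeasurableSet (S i)) (hdisj : Pairwise (Function.onFun Disjoint S)) {ε : ℝ≥0∞}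
    (hε : ε ≠ 0) (h : ∀ i, ε ≤ ∫⁻ x in S i, f x ∂μ) :
    ∫⁻ x, f x ∂μ = ⊤ :=
  top_unique <| calc
    ⊤ = ∑' _ : ι, ε := (ENNReal.tsum_const_eq_top_of_ne_zero hε).symm
    _ ≤ ∑' i, ∫⁻ x in S i, f x ∂μ := ENNReal.tsum_le_tsum h
    _ = ∫⁻ x in ⋃ i, S i, f x ∂μ := (lintegral_iUnion hS hdisj f).symm
    _ ≤ ∫⁻ x, f x ∂μ := setLIntegral_le_lintegral _ f

lemma ofReal_le_setLIntegral_norm_curveExtension_rpow {m : ℕ} (hm : 3 ≤ m) {A : ℝ}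
    (hA : 1 ≤ A) :
    ENNReal.ofReal (1 / (80 * 10 ^ (m + 1))) ≤
      ∫⁻ p in Ioc 0 (A / 20) ×ˢ Ioc (A ^ m) (5 / 4 * A ^ m),
        ENNReal.ofReal (‖curveExtension m p.1 p.2‖ ^ ((m : ℝ) + 1)) := by
  have hA₀ : 0 < A := one_pos.trans_le hA
  have hAm : 0 < A ^ m := pow_pos hA₀ m
  have hpoint : ∀ p ∈ Ioc 0 (A / 20) ×ˢ Ioc (A ^ m) (5 / 4 * A ^ m),
      (1 / (10 * A)) ^ (m + 1) ≤ ‖curveExtension m p.1 p.2‖ ^ ((m : ℝ) + 1) := by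
    rintro ⟨a, b⟩ ⟨⟨ha, ha'⟩, hb, hb'⟩
    have hnorm := div_ten_le_norm_curveExtension (a := a) (b := b) hm ha.le (inv_pos.2 hA₀)
      (inv_le_one_of_one_le₀ hA) (by rw [← div_eq_mul_inv, div_le_iff₀ hA₀]; linarith)
      (by rw [inv_pow, ← div_eq_mul_inv, le_div_iff₀ hAm]; linarith)
      (by rw [inv_pow, ← div_eq_mul_inv, div_le_iff₀ hAm]; linarith)
    rw [← Nat.cast_succ, Real.rpow_natCast]
    exact pow_le_pow_left₀ (by positivity) (by simpa [div_eq_mul_inv, mul_comm] using hnorm) _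
  calc ENNReal.ofReal (1 / (80 * 10 ^ (m + 1)))
      = ENNReal.ofReal ((1 / (10 * A)) ^ (m + 1)) *
          volume (Ioc 0 (A / 20) ×ˢ Ioc (A ^ m) (5 / 4 * A ^ m)) := by
        rw [Measure.volume_eq_prod, Measure.prod_prod, Real.volume_Ioc, Real.volume_Ioc, sub_zero,
          show 5 / 4 * A ^ m - A ^ m = A ^ m / 4 by ring, ← ENNReal.ofReal_mul (by positivity),
          ← ENNReal.ofReal_mul (by positivity), div_pow, mul_pow, pow_succ A]
        congr 1
        field_simp
        ring
    _ = ∫⁻ _ in Ioc 0 (A / 20) ×ˢ Ioc (A ^ m) (5 / 4 * A ^ m),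
          ENNReal.ofReal ((1 / (10 * A)) ^ (m + 1)) := (setLIntegral_const _ _).symm
    _ ≤ _ := setLIntegral_mono' (measurableSet_Ioc.prod measurableSet_Ioc)
          fun p hp => ENNReal.ofReal_le_ofReal (hpoint p hp)

theorem statement3 (m : ℕ) (hm : 3 ≤ m) :
    ∫⁻ p : ℝ × ℝ, ENNReal.ofReal
        (‖∫ x in Ioc (0:ℝ) 1,
            Complex.exp (-Complex.I * ((p.1 : ℂ) * (x : ℂ) + (p.2 : ℂ) * (x : ℂ) ^ m))‖ ^
          ((m : ℝ) + 1)) = ⊤ := by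
  change ∫⁻ p : ℝ × ℝ, ENNReal.ofReal (‖curveExtension m p.1 p.2‖ ^ ((m : ℝ) + 1)) = ⊤
  have hgap (i j : ℕ) (hij : i < j) : 5 / 4 * ((2 : ℝ) ^ i) ^ m ≤ ((2 : ℝ) ^ j) ^ m := by
    calc 5 / 4 * ((2 : ℝ) ^ i) ^ m ≤ 2 ^ m * (2 ^ i) ^ m := by
          gcongr
          linarith [pow_le_pow_right₀ (one_le_two (α := ℝ)) hm]
      _ = (2 ^ (i + 1)) ^ m := by ring
      _ ≤ (2 ^ j) ^ m := by gcongr <;> norm_num; omega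
  refine lintegral_eq_top_of_le_setLIntegral
    (S := fun n : ℕ => Ioc 0 (2 ^ n / 20) ×ˢ Ioc ((2 ^ n) ^ m) (5 / 4 * (2 ^ n) ^ m))
    (fun n => measurableSet_Ioc.prod measurableSet_Ioc) ?_ (by positivity)
    fun n => ofReal_le_setLIntegral_norm_curveExtension_rpow hm (one_le_pow₀ one_le_two)
  exact (pairwise_disjoint_on _).2 fun i j hij =>
    Disjoint.set_prod_right (Ioc_disjoint_Ioc_of_le (hgap i j hij)) _ _
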